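/- arXiv:1405.4926 — 2 statements merged into one kernel-verified Lean document; each statement's English description precedes it below -/
import Mathlib

section
/- In the binary matroid P_9 with columns labeled 1,…,9 (1–4 the identity columns), the set A = {1,2,5,6} is both a circuit and a cocircuit, and the partition (A, {3,4,7,8,9}) is a non-minimal exact 3-separation of P_9. -/
open Set Matroid

set_option maxRecDepth 100000
set_option maxHeartbeats 1600000

namespace PaperMatroid

variable {α : Type*} {β : Type*}

/-! ### A linear-algebraic augmentation lemma, used to construct vector matroids -/

theorem aug_lemma {F : Type} [Field F] {n : ℕ} {γ : Type*} [Fintype γ]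
    (φ : γ → (Fin n → F)) {I J : Set γ}
    (hI : LinearIndependent F (I.restrict φ)) (hJ : LinearIndependent F (J.restrict φ))
    (hIJ : I.ncard < J.ncard) :
    ∃ e ∈ J, e ∉ I ∧ LinearIndependent F ((insert e I).restrict φ) := by
  classical
  by_contra h
  push_neg at h
  have hspan : ∀ e ∈ J, φ e ∈ Submodule.span F (φ '' I) := by
    intro e he
    by_cases heI : e ∈ I
    · exact Submodule.subset_span ⟨e, heI, rfl⟩
    by_contra hnot
    exact h e he heI ((linearIndepOn_insert (f := φ) heI).2 ⟨hI, hnot⟩)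
  have hle : Submodule.span F (φ '' J) ≤ Submodule.span F (φ '' I) := by
    rw [Submodule.span_le]
    rintro - ⟨e, he, rfl⟩
    exact hspan e he
  have hinjI : Set.InjOn φ I := by
    rw [Set.injOn_iff_injective]; exact hI.injective
  have hinjJ : Set.InjOn φ J := by
    rw [Set.injOn_iff_injective]; exact hJ.injective
  haveI : Fintype ↥(φ '' I) := Fintype.ofFinite _
  haveI : Fintype ↥(φ '' J) := Fintype.ofFinite _
  have hrI : Module.finrank F (Submodule.span F (φ '' I)) = (φ '' I).toFinset.card :=
    finrank_span_set_eq_card (LinearIndepOn.id_image (v := φ) (s := I) hI)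
  have hrJ : Module.finrank F (Submodule.span F (φ '' J)) = (φ '' J).toFinset.card :=
    finrank_span_set_eq_card (LinearIndepOn.id_image (v := φ) (s := J) hJ)
  have hmono := Submodule.finrank_mono hle
  rw [hrI, hrJ] at hmono
  rw [← Set.ncard_eq_toFinset_card', ← Set.ncard_eq_toFinset_card'] at hmono
  rw [Set.ncard_image_of_injOn hinjJ, Set.ncard_image_of_injOn hinjI] at hmono
  omega

/-- The `F`-linear vector matroid on `Fin m` whose element `j` is the vector `φ j`. -/
noncomputable def vecMatroid {F : Type} [Field F] {n m : ℕ} (φ : Fin m → (Fin n → F)) :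
    Matroid (Fin m) :=
  (IndepMatroid.ofFinite (Set.finite_univ)
    (fun I => LinearIndependent F (I.restrict φ))
    (linearIndependent_empty_type)
    (fun _ _ hJ hIJ => hJ.comp (Set.inclusion hIJ) (Set.inclusion_injective hIJ))
    (fun _ _ hI hJ hcard => aug_lemma φ hI hJ hcard)
    (fun I _ => Set.subset_univ I)).matroid

/-- The vector matroid `M[A]` of a matrix `A` over GF(2): the ground set is the set of
column indices, and a set is independent iff the corresponding columns are linearly
independent over GF(2). -/
noncomputable def mOf {r m : ℕ} (A : Matrix (Fin r) (Fin m) (ZMod 2)) : Matroid (Fin m) :=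
  vecMatroid (fun j i => A i j)

/-- The vector matroid obtained from the matrix `A` by appending the column `v`. -/
noncomputable def extByCol {r m : ℕ} (A : Matrix (Fin r) (Fin m) (ZMod 2))
    (v : Fin r → ZMod 2) : Matroid (Fin (m + 1)) :=
  vecMatroid (Fin.snoc (fun j i => A i j) v)

/-! ### Minors and isomorphism -/

/-- `M ＼ D`: delete the set `D` from `M`. -/
def deleteSet (M : Matroid α) (D : Set α) : Matroid α := M ↾ (M.E \ D)

/-- `M / C`: contract the set `C` in `M`, defined by duality `M / C = (M✶ ＼ C)✶`. -/
def contractSet (M : Matroid α) (C : Set α) : Matroid α := (deleteSet (M✶) C)✶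

/-- `N` is a minor of `M` if it is obtained from `M` by a contraction followed by a
deletion (this includes `N = M`). -/
def IsMinor (N M : Matroid α) : Prop := ∃ C D : Set α, N = deleteSet (contractSet M C) D

/-- An isomorphism from `M` to `N` is a bijection between the ground sets preserving
independence in both directions. -/
def IsIso (M : Matroid α) (N : Matroid β) : Prop :=
  ∃ e : α → β, Set.BijOn e M.E N.E ∧ ∀ I ⊆ M.E, (M.Indep I ↔ N.Indep (e '' I))

/-- `M` has a minor isomorphic to `N`. -/
def HasIsoMinor (M : Matroid α) (N : Matroid β) : Prop :=
  ∃ M' : Matroid α, IsMinor M' M ∧ IsIso M' N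

/-! ### Rank, connectivity and separations -/

/-- The rank of a set `X` in a matroid `M`: the supremum of the cardinalities of
independent subsets of `X` (for finite matroids this is the usual rank function). -/
noncomputable def rk (M : Matroid α) (X : Set α) : ℕ :=
  sSup (Set.ncard '' {I | M.Indep I ∧ I ⊆ X})

/-- The connectivity function `λ_M(X) = r(X) + r(E − X) − r(M)`, valued in `ℤ`. -/
noncomputable def lam (M : Matroid α) (X : Set α) : ℤ :=
  (rk M X : ℤ) + (rk M (M.E \ X) : ℤ) - (rk M M.E : ℤ)

/-- `(A, B)` is a `k`-separation of `M`. -/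
def IsKSep (M : Matroid α) (k : ℕ) (A B : Set α) : Prop :=
  A ∪ B = M.E ∧ Disjoint A B ∧ k ≤ A.ncard ∧ k ≤ B.ncard ∧ lam M A ≤ (k : ℤ) - 1

/-- `(A, B)` is an exact `k`-separation of `M`. -/
def IsExactKSep (M : Matroid α) (k : ℕ) (A B : Set α) : Prop :=
  A ∪ B = M.E ∧ Disjoint A B ∧ k ≤ A.ncard ∧ k ≤ B.ncard ∧ lam M A = (k : ℤ) - 1

/-- `(A, B)` is a non-minimal exact `k`-separation of `M`. -/
def IsNonMinimalExactKSep (M : Matroid α) (k : ℕ) (A B : Set α) : Prop :=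
  IsExactKSep M k A B ∧ k < A.ncard ∧ k < B.ncard

/-- A matroid is `n`-connected (`n ≥ 2`) if it has no `k`-separation for any `k ≤ n − 1`. -/
def NConnected (M : Matroid α) (n : ℕ) : Prop :=
  2 ≤ n ∧ ∀ k, 1 ≤ k → k ≤ n - 1 → ∀ A B : Set α, ¬ IsKSep M k A B

/-- A matroid is internally 4-connected if it is 3-connected and has no non-minimal
exact 3-separation. -/
def InternallyFourConnected (M : Matroid α) : Prop :=
  NConnected M 3 ∧ ∀ A B : Set α, ¬ IsNonMinimalExactKSep M 3 A B

/-! ### Circuits and simplicity -/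

/-- A circuit is a minimal dependent set. -/
def IsCircuit (M : Matroid α) (C : Set α) : Prop :=
  C ⊆ M.E ∧ ¬ M.Indep C ∧ ∀ C' : Set α, C' ⊂ C → M.Indep C'

/-- A cocircuit of `M` is a circuit of the dual `M✶`. -/
def IsCocircuit (M : Matroid α) (C : Set α) : Prop := IsCircuit M✶ C

/-- A triangle is a 3-element circuit. -/
def IsTriangle (M : Matroid α) (C : Set α) : Prop := IsCircuit M C ∧ C.ncard = 3

/-- A triad is a 3-element cocircuit. -/
def IsTriad (M : Matroid α) (C : Set α) : Prop := IsCocircuit M C ∧ C.ncard = 3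

/-- `X` is a union of circuits of `M`. -/
def IsUnionOfCircuits (M : Matroid α) (X : Set α) : Prop :=
  ∃ S : Set (Set α), (∀ C ∈ S, IsCircuit M C) ∧ X = ⋃₀ S

/-- `X` is a union of cocircuits of `M`. -/
def IsUnionOfCocircuits (M : Matroid α) (X : Set α) : Prop :=
  ∃ S : Set (Set α), (∀ C ∈ S, IsCocircuit M C) ∧ X = ⋃₀ S

/-- A matroid is simple if every circuit has at least 3 elements (equivalently, it has
no loops and no parallel pairs). -/
def Simple (M : Matroid α) : Prop := ∀ C : Set α, IsCircuit M C → 3 ≤ C.ncard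

/-- A matroid is cosimple if its dual is simple. -/
def Cosimple (M : Matroid α) : Prop := Simple M✶

/-! ### Extensions and coextensions -/

/-- `M` is a single-element extension of `N` by the element `e`, i.e. `M ＼ e = N`. -/
def IsSingleExt (M : Matroid α) (e : α) (N : Matroid α) : Prop :=
  e ∈ M.E ∧ deleteSet M {e} = N

/-- `M` is a single-element coextension of `N` by the element `f`, i.e. `M / f = N`. -/
def IsSingleCoext (M : Matroid α) (f : α) (N : Matroid α) : Prop :=
  f ∈ M.E ∧ contractSet M {f} = N

/-! ### Representability -/

/-- `M` is represented over the field `F` by the vector family `φ`. -/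
def IsRepBy (M : Matroid α) (F : Type) [Field F] {n : ℕ} (φ : α → (Fin n → F)) : Prop :=
  ∀ I : Set α, M.Indep I ↔ (I ⊆ M.E ∧ LinearIndependent F (I.restrict φ))

/-- `M` is representable over the field `F`. -/
def RepOver (F : Type) [Field F] (M : Matroid α) : Prop :=
  ∃ (n : ℕ) (φ : α → (Fin n → F)), IsRepBy M F φ

/-- A binary matroid is a matroid representable over GF(2). -/
def Binary (M : Matroid α) : Prop := RepOver (ZMod 2) M

/-- A regular matroid is a matroid representable over every field. -/
def Regular (M : Matroid α) : Prop := ∀ (F : Type) [Field F], RepOver F M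

/-! ### 3-decomposers and condition (iii) of the induced-separation theorem -/

/-- `N` (with the non-minimal exact 3-separation `(A,B)` as inducer) is a 3-decomposer
for `M`: `M` has a minor isomorphic to `N` via an isomorphism `φ`, and a non-minimal
exact 3-separation `(X,Y)` of `M` with `φ(A) ⊆ X` and `φ(B) ⊆ Y`. -/
def IsThreeDecomposer (M : Matroid α) (N : Matroid β) (A B : Set β) : Prop :=
  IsNonMinimalExactKSep N 3 A B ∧
  ∃ (M' : Matroid α) (φ : β → α), IsMinor M' M ∧ Set.BijOn φ N.E M'.E ∧
    (∀ I ⊆ N.E, (N.Indep I ↔ M'.Indep (φ '' I))) ∧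
    ∃ X Y : Set α, IsNonMinimalExactKSep M 3 X Y ∧ φ '' A ⊆ X ∧ φ '' B ⊆ Y

/-- Condition (iii) (a)–(d) of the induced-separation theorem, for a matroid `M` obtained
from a matroid with exact `k`-separation `(A, B)` by an extension by `e` and a
coextension by `f`. -/
def CondIII (M : Matroid α) (e f : α) (k : ℕ) (A : Set α) : Prop :=
  (lam (contractSet M {f}) A = (k : ℤ) - 1 ∧ lam (deleteSet M {e}) A = (k : ℤ) - 1) ∨
  ((lam (contractSet M {f}) A = (k : ℤ) - 1 ∧
      lam (deleteSet M {e}) (insert f A) = (k : ℤ) - 1) →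
    (lam M (insert f A) = (k : ℤ) - 1 ∨
      ∃ g ∈ A, IsTriangle M {e, f, g} ∨ IsTriad M {e, f, g})) ∨
  ((lam (contractSet M {f}) (insert e A) = (k : ℤ) - 1 ∧
      lam (deleteSet M {e}) A = (k : ℤ) - 1) →
    (lam M (insert e A) = (k : ℤ) - 1 ∨
      ∃ g ∈ A, IsTriangle M {e, f, g} ∨ IsTriad M {e, f, g})) ∨
  ((lam (contractSet M {f}) (insert e A) = (k : ℤ) - 1 ∧
      lam (deleteSet M {e}) (insert f A) = (k : ℤ) - 1) →
    ∃ g ∈ A, IsTriangle M {e, f, g} ∨ IsTriad M {e, f, g})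

/-! ### The named matroids (columns `1, …, m` of the paper are `0, …, m-1` here) -/

/-- The Fano matroid `F_7 = M[I_3 | D_7]`. -/
noncomputable def F7 : Matroid (Fin 7) :=
  mOf !![1,0,0,0,1,1,1; 0,1,0,1,0,1,1; 0,0,1,1,1,0,1]

/-- `AG(3,2) = M[I_4 | D_A]`. -/
noncomputable def AG32 : Matroid (Fin 8) :=
  mOf !![1,0,0,0,0,1,1,1; 0,1,0,0,1,0,1,1; 0,0,1,0,1,1,0,1; 0,0,0,1,1,1,1,0]

/-- The matrix `[I_4 | D_8]` representing `S_8`. -/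
def S8mat : Matrix (Fin 4) (Fin 8) (ZMod 2) :=
  !![1,0,0,0,0,1,1,1; 0,1,0,0,1,0,1,1; 0,0,1,0,1,1,0,1; 0,0,0,1,1,1,1,1]

/-- `S_8 = M[I_4 | D_8]`. -/
noncomputable def S8 : Matroid (Fin 8) := mOf S8mat

/-- The matrix `[I_4 | D_9]` representing `P_9`. -/
def P9mat : Matrix (Fin 4) (Fin 9) (ZMod 2) :=
  !![1,0,0,0,0,1,1,1,1; 0,1,0,0,1,0,1,1,1; 0,0,1,0,1,1,0,1,0; 0,0,0,1,1,1,1,1,0]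

/-- `P_9 = M[I_4 | D_9]`. -/
noncomputable def P9 : Matroid (Fin 9) := mOf P9mat

/-- `S_10 = M[I_4 | D_10]`. -/
noncomputable def S10 : Matroid (Fin 10) :=
  mOf !![1,0,0,0,0,1,1,1,1,1; 0,1,0,0,1,0,1,1,1,0; 0,0,1,0,1,1,0,1,0,0; 0,0,0,1,1,1,1,1,0,1]

/-- `E_4 = M[I_5 | D]`. -/
noncomputable def E4 : Matroid (Fin 10) :=
  mOf !![1,0,0,0,0,0,1,1,1,1; 0,1,0,0,0,1,0,1,1,1; 0,0,1,0,0,1,1,0,1,0;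
         0,0,0,1,0,1,1,1,1,0; 0,0,0,0,1,0,1,0,0,1]

/-- `E_5 = M[I_5 | D']`. -/
noncomputable def E5 : Matroid (Fin 10) :=
  mOf !![1,0,0,0,0,0,1,1,1,1; 0,1,0,0,0,1,0,1,1,1; 0,0,1,0,0,1,1,0,1,0;
         0,0,0,1,0,1,1,1,1,0; 0,0,0,0,1,1,0,1,0,0]

/-- `T_12 = M[I_6 | D'']`. -/
noncomputable def T12 : Matroid (Fin 12) :=
  mOf !![1,0,0,0,0,0,1,1,0,0,0,1; 0,1,0,0,0,0,1,0,0,0,1,1; 0,0,1,0,0,0,0,0,0,1,1,1;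
         0,0,0,1,0,0,0,0,1,1,1,0; 0,0,0,0,1,0,0,1,1,1,0,0; 0,0,0,0,0,1,1,1,1,0,0,0]

/-- The cycle matroid `M(K_{3,3})` of the complete bipartite graph `K_{3,3}`, realised
as the GF(2) vector matroid of its vertex-edge incidence matrix (vertices
`u_0,u_1,u_2,w_0,w_1,w_2`; the edge with index `3i+j` joins `u_i` to `w_j`). -/
noncomputable def MK33 : Matroid (Fin 9) :=
  mOf !![1,1,1,0,0,0,0,0,0; 0,0,0,1,1,1,0,0,0; 0,0,0,0,0,0,1,1,1;
         1,0,0,1,0,0,1,0,0; 0,1,0,0,1,0,0,1,0; 0,0,1,0,0,1,0,0,1]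

/-- The cycle matroid `M(K_5)` of the complete graph `K_5`, realised as the GF(2)
vector matroid of its vertex-edge incidence matrix (vertices `0,…,4`, edges in the
order `01,02,03,04,12,13,14,23,24,34`). -/
noncomputable def MK5 : Matroid (Fin 10) :=
  mOf !![1,1,1,1,0,0,0,0,0,0; 1,0,0,0,1,1,1,0,0,0; 0,1,0,0,1,0,0,1,1,0;
         0,0,1,0,0,1,0,1,0,1; 0,0,0,1,0,0,1,0,1,1]

/-- `Z_4`: the extension of `S_8` by the column `(1,1,1,0)`. -/
noncomputable def Z4 : Matroid (Fin 9) := extByCol S8mat ![1,1,1,0]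

/-- `D_1`: the extension of `P_9` by the column `(1,1,1,0)`. -/
noncomputable def D1 : Matroid (Fin 10) := extByCol P9mat ![1,1,1,0]

/-- `D_3`: the extension of `P_9` by the column `(0,0,1,1)`. -/
noncomputable def D3 : Matroid (Fin 10) := extByCol P9mat ![0,0,1,1]


/-! ### Auxiliary machinery for explicit computations in `P9` -/

/-- The columns of `P9mat` as a family of vectors. -/
def phiP9 : Fin 9 → Fin 4 → ZMod 2 := fun j i => P9mat i j

/-- A decidable reformulation of linear independence of a set of columns of `P9mat`. -/
def LIcond (s : Finset (Fin 9)) : Prop :=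
  ∀ c : Fin 9 → ZMod 2, (∀ j, j ∉ s → c j = 0) →
    (∀ i, (∑ j, c j * P9mat i j) = 0) → ∀ j, c j = 0

instance (s : Finset (Fin 9)) : Decidable (LIcond s) := by
  unfold LIcond; infer_instance

lemma sum_eq_aux (c : Fin 9 → ZMod 2) (s : Finset (Fin 9))
    (hsupp : ∀ j, j ∉ s → c j = 0) :
    (∑ x : (↑s : Set (Fin 9)), c ↑x • phiP9 ↑x) = ∑ j, c j • phiP9 j := by
  rw [Finset.sum_finset_coe (f := fun j => c j • phiP9 j)]
  exact Finset.sum_subset (Finset.subset_univ s)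
    (fun j _ hj => by rw [hsupp j hj, zero_smul])

lemma zero_iff_aux (c : Fin 9 → ZMod 2) :
    (∑ j, c j • phiP9 j) = 0 ↔ ∀ i, (∑ j, c j * P9mat i j) = 0 := by
  rw [funext_iff]
  exact forall_congr' fun i => by simp [phiP9]

lemma li_iff (s : Finset (Fin 9)) :
    LinearIndependent (ZMod 2) (((↑s : Set (Fin 9))).restrict phiP9) ↔ LIcond s := by
  rw [Fintype.linearIndependent_iff]
  constructor
  · intro h c hsupp hsum j
    by_cases hj : j ∈ s
    · refine h (fun x => c ↑x) ?_ ⟨j, hj⟩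
      calc (∑ x : (↑s : Set (Fin 9)), c ↑x • ((↑s : Set (Fin 9))).restrict phiP9 x)
          = ∑ x : (↑s : Set (Fin 9)), c ↑x • phiP9 ↑x := rfl
        _ = ∑ j, c j • phiP9 j := sum_eq_aux c s hsupp
        _ = 0 := (zero_iff_aux c).2 hsum
    · exact hsupp j hj
  · intro h g hg x
    set c : Fin 9 → ZMod 2 := fun j => if hj : j ∈ s then g ⟨j, hj⟩ else 0 with hc
    have hsupp : ∀ j, j ∉ s → c j = 0 := fun j hj => dif_neg hj
    have hcg : ∀ x : (↑s : Set (Fin 9)), c ↑x = g x := by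
      rintro ⟨x, hx⟩
      simp only [hc]
      exact dif_pos hx
    have hsum : (∑ j, c j • phiP9 j) = 0 := by
      rw [← sum_eq_aux c s hsupp, ← hg]
      exact Finset.sum_congr rfl fun x _ => by rw [hcg x]; rfl
    have hz := h c hsupp ((zero_iff_aux c).1 hsum) ↑x
    rw [← hcg x]; exact hz


/-- An even cheaper decidable reformulation: over `ZMod 2` a linear dependence is just a
subset of columns summing to zero. -/
def LIcond' (s : Finset (Fin 9)) : Prop :=
  ∀ u ∈ s.powerset, (∀ i, (∑ j ∈ u, P9mat i j) = 0) → u = ∅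

instance (s : Finset (Fin 9)) : Decidable (LIcond' s) := by
  unfold LIcond'; infer_instance

lemma licond_iff (s : Finset (Fin 9)) : LIcond s ↔ LIcond' s := by
  constructor
  · intro h u hu hsum
    have hu' := Finset.mem_powerset.1 hu
    set c : Fin 9 → ZMod 2 := fun j => if j ∈ u then 1 else 0 with hc
    have hsupp : ∀ j, j ∉ s → c j = 0 := by
      intro j hj
      simp only [hc, if_neg (fun hju => hj (hu' hju))]
    have hsum' : ∀ i, (∑ j, c j * P9mat i j) = 0 := by
      intro i
      calc ∑ j, c j * P9mat i j = ∑ j, (if j ∈ u then P9mat i j else 0) := by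
            refine Finset.sum_congr rfl fun j _ => ?_
            by_cases hj : j ∈ u <;> simp [hc, hj]
        _ = ∑ j ∈ Finset.univ ∩ u, P9mat i j := Finset.sum_ite_mem _ _ _
        _ = ∑ j ∈ u, P9mat i j := by rw [Finset.univ_inter]
        _ = 0 := hsum i
    have hz := h c hsupp hsum'
    ext j
    simp only [Finset.notMem_empty, iff_false]
    intro hj
    have hzj := hz j
    rw [hc] at hzj
    simp only [if_pos hj] at hzj
    exact one_ne_zero hzj
  · intro h c hsupp hsum j
    by_contra hcj
    have h01 : ∀ a : ZMod 2, a = 0 ∨ a = 1 := by decide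
    set u : Finset (Fin 9) := Finset.univ.filter (fun j => c j = 1) with hu
    have husub : u ⊆ s := by
      intro x hx
      rw [hu, Finset.mem_filter] at hx
      by_contra hxs
      rw [hsupp x hxs] at hx
      exact one_ne_zero hx.2.symm
    have hsum' : ∀ i, (∑ x ∈ u, P9mat i x) = 0 := by
      intro i
      rw [hu]
      calc ∑ x ∈ Finset.univ.filter (fun j => c j = 1), P9mat i x
          = ∑ x, c x * P9mat i x := by
            rw [Finset.sum_filter]
            refine Finset.sum_congr rfl fun x _ => ?_
            rcases h01 (c x) with h0 | h1
            · rw [h0, zero_mul, if_neg (show ¬(0 : ZMod 2) = 1 by decide)]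
            · rw [h1, if_pos rfl, one_mul]
        _ = 0 := hsum i
    have hue := h u (Finset.mem_powerset.2 husub) hsum'
    rcases h01 (c j) with h0 | h1
    · exact hcj h0
    · have hj : j ∈ u := by rw [hu, Finset.mem_filter]; exact ⟨Finset.mem_univ j, h1⟩
      rw [hue] at hj
      exact absurd hj (Finset.notMem_empty j)

/-- List-level version of `LIcond'`, much faster for kernel evaluation. -/
def LIcondL (l : List (Fin 9)) : Prop :=
  ∀ t ∈ l.sublists, (∀ i, ((t.map fun j => P9mat i j).sum = 0)) → t = []

instance (l : List (Fin 9)) : Decidable (LIcondL l) := by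
  unfold LIcondL; infer_instance

lemma licond_list (l : List (Fin 9)) (hnd : l.Nodup) :
    LIcond' l.toFinset ↔ LIcondL l := by
  constructor
  · intro h t ht hsum
    have hts : List.Sublist t l := List.mem_sublists.1 ht
    have htnd : t.Nodup := hnd.sublist hts
    have hsub : t.toFinset ⊆ l.toFinset := by
      intro x hx
      rw [List.mem_toFinset] at hx ⊢
      exact hts.subset hx
    have h0 : ∀ i, (∑ j ∈ t.toFinset, P9mat i j) = 0 := by
      intro i
      rw [List.sum_toFinset _ htnd]
      exact hsum i
    have hte := h t.toFinset (Finset.mem_powerset.2 hsub) h0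
    cases t with
    | nil => rfl
    | cons a t' =>
        exfalso
        have : a ∈ (a :: t').toFinset := by simp
        rw [hte] at this
        exact absurd this (Finset.notMem_empty a)
  · intro h u hu hsum
    have husub := Finset.mem_powerset.1 hu
    set t : List (Fin 9) := l.filter (fun x => decide (x ∈ u)) with htdef
    have hts : List.Sublist t l := List.filter_sublist
    have htnd : t.Nodup := hnd.sublist hts
    have htf : t.toFinset = u := by
      ext x
      rw [List.mem_toFinset, htdef, List.mem_filter]
      constructor
      · rintro ⟨-, hx⟩
        simpa using hx
      · intro hx
        refine ⟨?_, by simpa using hx⟩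
        have hxl := husub hx
        rwa [List.mem_toFinset] at hxl
    have h0 : ∀ i, ((t.map fun j => P9mat i j).sum = 0) := by
      intro i
      rw [← List.sum_toFinset _ htnd, htf]
      exact hsum i
    have hnil := h t (List.mem_sublists.2 hts) h0
    rw [← htf, hnil]
    rfl

lemma licond_of_list {s : Finset (Fin 9)} (l : List (Fin 9)) (hs : l.toFinset = s)
    (hnd : l.Nodup) (h : LIcondL l) : LIcond' s := hs ▸ (licond_list l hnd).2 h

lemma not_licond_of_list {s : Finset (Fin 9)} (l : List (Fin 9)) (hs : l.toFinset = s)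
    (hnd : l.Nodup) (h : ¬ LIcondL l) : ¬ LIcond' s :=
  hs ▸ fun H => h ((licond_list l hnd).1 H)

lemma P9_indep_iff' (I : Set (Fin 9)) :
    P9.Indep I ↔ LinearIndependent (ZMod 2) (I.restrict phiP9) := Iff.rfl

lemma P9_indep_coe (s : Finset (Fin 9)) : P9.Indep ↑s ↔ LIcond' s :=
  (P9_indep_iff' ↑s).trans ((li_iff s).trans (licond_iff s))

lemma P9_indep_of (S : Set (Fin 9)) (s : Finset (Fin 9)) (hS : S = ↑s) (h : LIcond' s) :
    P9.Indep S := hS ▸ (P9_indep_coe s).2 h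

lemma P9_dep_of (S : Set (Fin 9)) (s : Finset (Fin 9)) (hS : S = ↑s) (h : ¬ LIcond' s) :
    ¬ P9.Indep S := hS ▸ fun hi => h ((P9_indep_coe s).1 hi)

lemma P9_E : P9.E = Set.univ := rfl

lemma indep_ncard_le (I : Set (Fin 9)) (hI : P9.Indep I) : I.ncard ≤ 4 := by
  have h := (P9_indep_iff' I).1 hI
  haveI : Fintype I := I.toFinite.fintype
  have h2 := h.fintype_card_le_finrank
  rw [Module.finrank_fin_fun] at h2
  rwa [Set.ncard_eq_toFinset_card', Set.toFinset_card]

lemma rk_eq_of {M : Matroid (Fin 9)} {X : Set (Fin 9)} {n : ℕ} (I0 : Set (Fin 9))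
    (h1 : M.Indep I0) (h2 : I0 ⊆ X) (h3 : I0.ncard = n)
    (hub : ∀ I, M.Indep I → I ⊆ X → I.ncard ≤ n) : rk M X = n := by
  have hmem : n ∈ Set.ncard '' {I | M.Indep I ∧ I ⊆ X} := ⟨I0, ⟨h1, h2⟩, h3⟩
  have hb : ∀ b ∈ Set.ncard '' {I | M.Indep I ∧ I ⊆ X}, b ≤ n := by
    rintro b ⟨I, ⟨hI, hIX⟩, rfl⟩; exact hub I hI hIX
  exact le_antisymm (csSup_le ⟨n, hmem⟩ hb) (le_csSup ⟨n, hb⟩ hmem)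

lemma indep_finsetify {I : Set (Fin 9)} (hI : P9.Indep I) :
    ∃ u : Finset (Fin 9), (↑u : Set (Fin 9)) = I ∧ LIcond' u ∧ u.card = I.ncard := by
  have hfin : I.Finite := I.toFinite
  refine ⟨hfin.toFinset, hfin.coe_toFinset, ?_, (Set.ncard_eq_toFinset_card I hfin).symm⟩
  exact (P9_indep_coe _).1 (by rwa [hfin.coe_toFinset])

lemma four_subsets_B : ∀ u ∈ ({2,3,6,7,8} : Finset (Fin 9)).powerset, u.card = 4 →
    (u = {3,6,7,8} ∨ u = {2,6,7,8} ∨ u = {2,3,7,8} ∨ u = {2,3,6,8} ∨ u = {2,3,6,7}) := by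
  decide

lemma ub_B : ∀ I, P9.Indep I → I ⊆ ({2,3,6,7,8} : Set (Fin 9)) → I.ncard ≤ 3 := by
  intro I hI hIX
  by_contra hc
  push_neg at hc
  obtain ⟨J, hJI, hJ4⟩ := Set.exists_subset_card_eq (show 4 ≤ I.ncard from hc)
  obtain ⟨u, hcoe, hLI, hcard⟩ := indep_finsetify (hI.subset hJI)
  rw [hJ4] at hcard
  have hmem : u ∈ ({2,3,6,7,8} : Finset (Fin 9)).powerset := by
    rw [Finset.mem_powerset, ← Finset.coe_subset, hcoe]
    refine hJI.trans hIX |>.trans ?_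
    intro x hx
    simpa using hx
  rcases four_subsets_B u hmem hcard with h | h | h | h | h
  · exact not_licond_of_list [3,6,7,8] (by decide) (by decide) (by decide) (h ▸ hLI)
  · exact not_licond_of_list [2,6,7,8] (by decide) (by decide) (by decide) (h ▸ hLI)
  · exact not_licond_of_list [2,3,7,8] (by decide) (by decide) (by decide) (h ▸ hLI)
  · exact not_licond_of_list [2,3,6,8] (by decide) (by decide) (by decide) (h ▸ hLI)
  · exact not_licond_of_list [2,3,6,7] (by decide) (by decide) (by decide) (h ▸ hLI)

lemma ub_A : ∀ I, P9.Indep I → I ⊆ ({0,1,4,5} : Set (Fin 9)) → I.ncard ≤ 3 := by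
  intro I hI hIX
  by_contra hc
  push_neg at hc
  have hA4 : ({0,1,4,5} : Set (Fin 9)).ncard = 4 := by
    rw [show ({0,1,4,5} : Set (Fin 9)) = ↑({0,1,4,5} : Finset (Fin 9)) by simp,
      Set.ncard_coe_finset]
    decide
  have hIA : I = ({0,1,4,5} : Set (Fin 9)) :=
    Set.eq_of_subset_of_ncard_le hIX (by omega) (Set.toFinite _)
  rw [hIA] at hI
  exact P9_dep_of _ ({0,1,4,5} : Finset (Fin 9)) (by simp) (not_licond_of_list [0,1,4,5] (by decide) (by decide) (by decide)) hI

lemma base_of_card4 {B : Set (Fin 9)} (hI : P9.Indep B) (hc : B.ncard = 4) : P9.IsBase B := by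
  rw [Matroid.isBase_iff_maximal_indep]
  refine ⟨hI, fun I hI' hBI => ?_⟩
  exact (Set.eq_of_subset_of_ncard_le hBI
    (by rw [hc]; exact indep_ncard_le I hI') I.toFinite).symm.subset

lemma base_of (s : Finset (Fin 9)) (h : LIcond' s) (hcard : s.card = 4) :
    P9.IsBase (↑s : Set (Fin 9)) :=
  base_of_card4 ((P9_indep_coe s).2 h) (by rw [Set.ncard_coe_finset, hcard])

lemma base_ncard {B : Set (Fin 9)} (hB : P9.IsBase B) : B.ncard = 4 := by
  have h0 : P9.IsBase (↑({0,1,2,3} : Finset (Fin 9)) : Set (Fin 9)) :=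
    base_of _ (licond_of_list [0,1,2,3] (by decide) (by decide) (by decide)) (by rfl)
  rw [hB.ncard_eq_ncard_of_isBase h0, Set.ncard_coe_finset]
  decide

lemma dual_indep_of (S B : Set (Fin 9)) (hB : P9.IsBase B) (hd : Disjoint S B) :
    P9✶.Indep S := by
  rw [Matroid.dual_indep_iff_exists']
  exact ⟨by rw [P9_E]; exact Set.subset_univ S, B, hB, hd⟩

lemma compl_A : Set.univ \ ({0,1,4,5} : Set (Fin 9)) = ({2,3,6,7,8} : Set (Fin 9)) := by
  ext x; fin_cases x <;> simp

lemma rk_A : rk P9 ({0,1,4,5} : Set (Fin 9)) = 3 :=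
  rk_eq_of ({0,1,4} : Set (Fin 9))
    (P9_indep_of _ {0,1,4} (by simp) (licond_of_list [0,1,4] (by decide) (by decide) (by decide)))
    (by intro x hx; simp only [Set.mem_insert_iff, Set.mem_singleton_iff] at hx ⊢; tauto)
    (by rw [show ({0,1,4} : Set (Fin 9)) = ↑({0,1,4} : Finset (Fin 9)) by simp,
          Set.ncard_coe_finset]; decide)
    ub_A

lemma rk_B : rk P9 ({2,3,6,7,8} : Set (Fin 9)) = 3 :=
  rk_eq_of ({2,3,8} : Set (Fin 9))
    (P9_indep_of _ {2,3,8} (by simp) (licond_of_list [2,3,8] (by decide) (by decide) (by decide)))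
    (by intro x hx; simp only [Set.mem_insert_iff, Set.mem_singleton_iff] at hx ⊢; tauto)
    (by rw [show ({2,3,8} : Set (Fin 9)) = ↑({2,3,8} : Finset (Fin 9)) by simp,
          Set.ncard_coe_finset]; decide)
    ub_B

lemma rk_univ : rk P9 (Set.univ : Set (Fin 9)) = 4 :=
  rk_eq_of (↑({0,1,2,3} : Finset (Fin 9)))
    ((P9_indep_coe _).2 (licond_of_list [0,1,2,3] (by decide) (by decide) (by decide)))
    (Set.subset_univ _)
    (by rw [Set.ncard_coe_finset]; decide)
    (fun I hI _ => indep_ncard_le I hI)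

/-- In `P_9` (columns labelled `1,…,9` in the paper, `0,…,8` here), the set
`A = {1,2,5,6}` (here `{0,1,4,5}`) is both a circuit and a cocircuit, and
`(A, {3,4,7,8,9})` (here `(A, {2,3,6,7,8})`) is a non-minimal exact 3-separation. -/
theorem P9_circuit_cocircuit_separation :
    IsCircuit P9 ({0,1,4,5} : Set (Fin 9)) ∧
    IsCocircuit P9 ({0,1,4,5} : Set (Fin 9)) ∧
    IsNonMinimalExactKSep P9 3 ({0,1,4,5} : Set (Fin 9))
      ({2,3,6,7,8} : Set (Fin 9)) := by
  have hAco : ({0,1,4,5} : Set (Fin 9)) = ↑({0,1,4,5} : Finset (Fin 9)) := by simp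
  have hdep : ¬ P9.Indep ({0,1,4,5} : Set (Fin 9)) := P9_dep_of _ _ hAco (not_licond_of_list [0,1,4,5] (by decide) (by decide) (by decide))
  have hsubA : ∀ C' : Set (Fin 9), C' ⊂ ({0,1,4,5} : Set (Fin 9)) →
      ∃ x ∈ ({0,1,4,5} : Set (Fin 9)), C' ⊆ ({0,1,4,5} : Set (Fin 9)) \ {x} := by
    intro C' hss
    obtain ⟨x, hxA, hxC⟩ := Set.exists_of_ssubset hss
    exact ⟨x, hxA, Set.subset_diff_singleton hss.subset hxC⟩
  have hd0 : ({0,1,4,5} : Set (Fin 9)) \ {0} ⊆ ↑({1,4,5} : Finset (Fin 9)) := by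
    intro y hy
    simp only [Set.mem_diff, Set.mem_insert_iff, Set.mem_singleton_iff,
      Finset.coe_insert, Finset.coe_singleton] at hy ⊢
    tauto
  have hd1 : ({0,1,4,5} : Set (Fin 9)) \ {1} ⊆ ↑({0,4,5} : Finset (Fin 9)) := by
    intro y hy
    simp only [Set.mem_diff, Set.mem_insert_iff, Set.mem_singleton_iff,
      Finset.coe_insert, Finset.coe_singleton] at hy ⊢
    tauto
  have hd4 : ({0,1,4,5} : Set (Fin 9)) \ {4} ⊆ ↑({0,1,5} : Finset (Fin 9)) := by
    intro y hy
    simp only [Set.mem_diff, Set.mem_insert_iff, Set.mem_singleton_iff,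
      Finset.coe_insert, Finset.coe_singleton] at hy ⊢
    tauto
  have hd5 : ({0,1,4,5} : Set (Fin 9)) \ {5} ⊆ ↑({0,1,4} : Finset (Fin 9)) := by
    intro y hy
    simp only [Set.mem_diff, Set.mem_insert_iff, Set.mem_singleton_iff,
      Finset.coe_insert, Finset.coe_singleton] at hy ⊢
    tauto
  refine ⟨⟨by rw [P9_E]; exact Set.subset_univ _, hdep, ?_⟩, ⟨?_, ?_, ?_⟩, ⟨⟨?_, ?_, ?_, ?_, ?_⟩, ?_, ?_⟩⟩
  · -- circuit minimality
    intro C' hss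
    obtain ⟨x, hxA, hsub⟩ := hsubA C' hss
    simp only [Set.mem_insert_iff, Set.mem_singleton_iff] at hxA
    rcases hxA with rfl | rfl | rfl | rfl
    · exact ((P9_indep_coe {1,4,5}).2 (licond_of_list [1,4,5] (by decide) (by decide) (by decide))).subset (hsub.trans hd0)
    · exact ((P9_indep_coe {0,4,5}).2 (licond_of_list [0,4,5] (by decide) (by decide) (by decide))).subset (hsub.trans hd1)
    · exact ((P9_indep_coe {0,1,5}).2 (licond_of_list [0,1,5] (by decide) (by decide) (by decide))).subset (hsub.trans hd4)
    · exact ((P9_indep_coe {0,1,4}).2 (licond_of_list [0,1,4] (by decide) (by decide) (by decide))).subset (hsub.trans hd5)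
  · -- cocircuit: subset of ground
    rw [Matroid.dual_ground, P9_E]; exact Set.subset_univ _
  · -- cocircuit: dependent in dual
    intro h
    rw [Matroid.dual_indep_iff_exists'] at h
    obtain ⟨-, B, hB, hdisj⟩ := h
    have hBsub : B ⊆ ({2,3,6,7,8} : Set (Fin 9)) := by
      intro b hb
      have hbA : b ∉ ({0,1,4,5} : Set (Fin 9)) :=
        fun hbA => Set.disjoint_left.1 hdisj hbA hb
      have hmem : b ∈ Set.univ \ ({0,1,4,5} : Set (Fin 9)) := ⟨trivial, hbA⟩
      rwa [compl_A] at hmem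
    have h1 := ub_B B hB.indep hBsub
    rw [base_ncard hB] at h1
    omega
  · -- cocircuit minimality
    intro C' hss
    obtain ⟨x, hxA, hsub⟩ := hsubA C' hss
    simp only [Set.mem_insert_iff, Set.mem_singleton_iff] at hxA
    rcases hxA with rfl | rfl | rfl | rfl
    · exact (dual_indep_of _ _ (base_of {0,2,3,6} (licond_of_list [0,2,3,6] (by decide) (by decide) (by decide)) (by rfl))
        (by rw [Finset.disjoint_coe]; decide)).subset (hsub.trans hd0)
    · exact (dual_indep_of _ _ (base_of {1,2,3,6} (licond_of_list [1,2,3,6] (by decide) (by decide) (by decide)) (by rfl))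
        (by rw [Finset.disjoint_coe]; decide)).subset (hsub.trans hd1)
    · exact (dual_indep_of _ _ (base_of {2,3,4,6} (licond_of_list [2,3,4,6] (by decide) (by decide) (by decide)) (by rfl))
        (by rw [Finset.disjoint_coe]; decide)).subset (hsub.trans hd4)
    · exact (dual_indep_of _ _ (base_of {2,3,5,6} (licond_of_list [2,3,5,6] (by decide) (by decide) (by decide)) (by rfl))
        (by rw [Finset.disjoint_coe]; decide)).subset (hsub.trans hd5)
  · -- union
    rw [P9_E]; ext x; fin_cases x <;> simp
  · -- disjoint
    rw [Set.disjoint_left]; intro a ha hb; fin_cases a <;> simp_all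
  · -- 3 ≤ ncard A
    rw [hAco, Set.ncard_coe_finset]; decide
  · -- 3 ≤ ncard B
    rw [show ({2,3,6,7,8} : Set (Fin 9)) = ↑({2,3,6,7,8} : Finset (Fin 9)) by simp,
      Set.ncard_coe_finset]
    decide
  · -- lambda
    unfold lam
    rw [P9_E, compl_A, rk_A, rk_B, rk_univ]
    norm_num
  · -- 3 < ncard A
    rw [hAco, Set.ncard_coe_finset]; decide
  · -- 3 < ncard B
    rw [show ({2,3,6,7,8} : Set (Fin 9)) = ↑({2,3,6,7,8} : Finset (Fin 9)) by simp,
      Set.ncard_coe_finset]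
    decide


end PaperMatroid
end

section
/- In the binary matroid E_4 with columns labeled 1,…,10 (1–5 the identity columns), each of the sets A_1 = {1,2,5,6,7,10} and A_2 = {1,2,3,4,8,9} is both a union of circuits of E_4 and a union of cocircuits of E_4, and each of the partitions (A_1, complement of A_1) and (A_2, complement of A_2) is a non-minimal exact 3-separation of E_4; in particular, E_4 is not internally 4-connected. -/
open Set Matroid

namespace PaperMatroid

variable {α : Type*} {β : Type*}

set_option maxRecDepth 2000

/-! ### Auxiliary machinery for computations in `E_4` -/

/-- The columns of the matrix representing `E_4`. -/
def Ecols : Fin 10 → Fin 5 → ZMod 2 := fun j i =>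
  !![1,0,0,0,0,0,1,1,1,1; 0,1,0,0,0,1,0,1,1,1; 0,0,1,0,0,1,1,0,1,0;
     0,0,0,1,0,1,1,1,1,0; 0,0,0,0,1,0,1,0,0,1] i j

/-- The list of sums of the columns indexed by nonempty sublists of `l`. -/
def sumsNE : List (Fin 10) → List (Fin 5 → ZMod 2)
  | [] => []
  | a :: l => Ecols a :: ((sumsNE l).map (fun v => Ecols a + v) ++ sumsNE l)

/-- Decidable criterion for linear independence over GF(2) of the columns indexed by a
duplicate-free list: no nonempty subfamily sums to zero. -/
def GoodL (l : List (Fin 10)) : Prop := ∀ v ∈ sumsNE l, v ≠ 0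

instance : DecidablePred GoodL := fun l => by unfold GoodL; infer_instance

/-- Linear independence of a set of columns over GF(2), phrased via subset sums. -/
def GoodF (s : Finset (Fin 10)) : Prop :=
  ∀ t : Finset (Fin 10), t ⊆ s → t ≠ ∅ → ∑ i ∈ t, Ecols i ≠ 0

lemma mem_sumsNE (l : List (Fin 10)) :
    l.Nodup → ∀ v : Fin 5 → ZMod 2,
      (v ∈ sumsNE l ↔ ∃ t : Finset (Fin 10), t ⊆ l.toFinset ∧ t ≠ ∅ ∧ ∑ i ∈ t, Ecols i = v) := by
  classical
  induction l with
  | nil =>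
    intro _ v
    simp only [sumsNE, List.not_mem_nil, false_iff, not_exists]
    rintro t ⟨hts, htne, -⟩
    exact htne (Finset.subset_empty.1 (by simpa using hts))
  | cons a l ih =>
    intro hnd v
    rw [List.nodup_cons] at hnd
    obtain ⟨hal, hndl⟩ := hnd
    have ihl := ih hndl
    constructor
    · intro hv
      rcases List.mem_cons.1 hv with h | h
      · exact ⟨{a}, ⟨by simp, by simp, by simpa using h.symm⟩⟩
      rcases List.mem_append.1 h with h | h
      · obtain ⟨w, hw, rfl⟩ := List.mem_map.1 h
        obtain ⟨t, hts, htne, hsum⟩ := (ihl w).1 hw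
        refine ⟨insert a t, ⟨?_, by simp, ?_⟩⟩
        · rw [List.toFinset_cons]
          exact Finset.insert_subset_insert a hts
        · rw [Finset.sum_insert (fun hat => hal (List.mem_toFinset.1 (hts hat))), hsum]
      · obtain ⟨t, hts, htne, hsum⟩ := (ihl v).1 h
        exact ⟨t, ⟨by rw [List.toFinset_cons]; exact hts.trans (Finset.subset_insert a _),
          htne, hsum⟩⟩
    · rintro ⟨t, hts, htne, hsum⟩
      rw [List.toFinset_cons] at hts
      by_cases hat : a ∈ t
      · by_cases hte : t.erase a = ∅
        · have hta : t = {a} := by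
            rw [← Finset.insert_erase hat, hte]
            rfl
          rw [hta, Finset.sum_singleton] at hsum
          exact List.mem_cons.2 (Or.inl hsum.symm)
        · have hsub : t.erase a ⊆ l.toFinset := by
            intro x hx
            rcases Finset.mem_insert.1 (hts (Finset.mem_of_mem_erase hx)) with h | h
            · exact absurd h (Finset.ne_of_mem_erase hx)
            · exact h
          have hmem := (ihl (∑ i ∈ t.erase a, Ecols i)).2 ⟨t.erase a, hsub, hte, rfl⟩
          refine List.mem_cons.2 (Or.inr (List.mem_append.2 (Or.inl (List.mem_map.2
            ⟨∑ i ∈ t.erase a, Ecols i, hmem, ?_⟩))))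
          rw [← hsum, Finset.add_sum_erase _ _ hat]
      · have hsub : t ⊆ l.toFinset := fun x hx => by
          rcases Finset.mem_insert.1 (hts hx) with h | h
          · exact absurd (h ▸ hx) hat
          · exact h
        exact List.mem_cons.2 (Or.inr (List.mem_append.2 (Or.inr
          ((ihl v).2 ⟨t, hsub, htne, hsum⟩))))

lemma goodF_iff_goodL (l : List (Fin 10)) (hnd : l.Nodup) :
    GoodF l.toFinset ↔ GoodL l := by
  constructor
  · intro h v hv hv0
    obtain ⟨t, hts, htne, hsum⟩ := (mem_sumsNE l hnd v).1 hv
    exact h t hts htne (hv0 ▸ hsum)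
  · intro h t hts htne hsum
    exact h 0 ((mem_sumsNE l hnd 0).2 ⟨t, hts, htne, hsum⟩) rfl

lemma li_iff_goodF (s : Finset (Fin 10)) :
    LinearIndependent (ZMod 2) ((↑s : Set (Fin 10)).restrict Ecols) ↔ GoodF s := by
  classical
  have hrw : ((↑s : Set (Fin 10)).restrict Ecols)
      = (Ecols ∘ (Subtype.val : (↑s : Set (Fin 10)) → Fin 10)) := rfl
  rw [hrw]
  refine (linearIndepOn_iff (R := ZMod 2) (v := Ecols) (s := ↑s)).trans ?_
  constructor
  · intro h t ht htne hsum
    set l : Fin 10 →₀ ZMod 2 := ∑ i ∈ t, Finsupp.single i 1 with hl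
    have hlapp : ∀ a, l a = if a ∈ t then 1 else 0 := by
      intro a
      rw [hl, Finsupp.finset_sum_apply]
      rw [Finset.sum_congr rfl (fun i _ => Finsupp.single_apply (a := i) (b := (1 : ZMod 2)))]
      simp [Finset.sum_ite_eq]
    have hsupp : l ∈ Finsupp.supported (ZMod 2) (ZMod 2) (↑s : Set (Fin 10)) := by
      rw [Finsupp.mem_supported' (ZMod 2) l]
      intro x hx
      rw [hlapp x, if_neg (fun hxt => hx (ht hxt))]
    have hcomb : (Finsupp.linearCombination (ZMod 2) Ecols) l = 0 := by
      rw [hl, map_sum]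
      rw [Finset.sum_congr rfl
        (fun i _ => Finsupp.linearCombination_single (ZMod 2) (v := Ecols) 1 i)]
      simpa using hsum
    have hl0 : l = 0 := h l hsupp hcomb
    obtain ⟨a, ha⟩ := Finset.nonempty_iff_ne_empty.2 htne
    have : l a = 0 := by rw [hl0]; rfl
    rw [hlapp a, if_pos ha] at this
    exact one_ne_zero this
  · intro h l hsupp hcomb
    have hone : ∀ a : ZMod 2, a ≠ 0 → a = 1 := by decide
    have hsub : l.support ⊆ s := by
      intro x hx
      by_contra hxs
      exact Finsupp.mem_support_iff.1 hx ((Finsupp.mem_supported' (ZMod 2) l).1 hsupp x hxs)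
    have hsum : ∑ i ∈ l.support, Ecols i = 0 := by
      rw [Finsupp.linearCombination_apply, Finsupp.sum] at hcomb
      rw [← hcomb]
      refine Finset.sum_congr rfl (fun i hi => ?_)
      rw [hone (l i) (Finsupp.mem_support_iff.1 hi), one_smul]
    have hse : l.support = ∅ := by
      by_contra hne
      exact h l.support hsub hne hsum
    exact Finsupp.support_eq_empty.1 hse

lemma E4_indep_li (I : Set (Fin 10)) :
    E4.Indep I ↔ LinearIndependent (ZMod 2) (I.restrict Ecols) := by
  show (vecMatroid Ecols).Indep I ↔ _
  exact Iff.rfl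

lemma E4_ground : E4.E = Set.univ := rfl

lemma E4_indep_iffF (s : Finset (Fin 10)) : E4.Indep ↑s ↔ GoodF s := by
  rw [E4_indep_li, li_iff_goodF]

lemma E4_indep_iffL (l : List (Fin 10)) (hnd : l.Nodup) :
    E4.Indep ↑l.toFinset ↔ GoodL l := by
  rw [E4_indep_iffF, goodF_iff_goodL l hnd]

lemma E4_indep_ncard_le (I : Set (Fin 10)) (hI : E4.Indep I) : I.ncard ≤ 5 := by
  have hli := (E4_indep_li I).1 hI
  haveI : Fintype I := Fintype.ofFinite _
  have hc := hli.fintype_card_le_finrank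
  rw [Module.finrank_fin_fun] at hc
  rwa [Set.ncard_eq_toFinset_card', Set.toFinset_card]

lemma rk_eq_of_s18 (M : Matroid (Fin 10)) (X : Set (Fin 10)) (r : ℕ) (I : Set (Fin 10))
    (hI : M.Indep I) (hIX : I ⊆ X) (hcard : I.ncard = r)
    (hub : ∀ J, M.Indep J → J ⊆ X → J.ncard ≤ r) : rk M X = r := by
  have hmem : r ∈ Set.ncard '' {I | M.Indep I ∧ I ⊆ X} := ⟨I, ⟨hI, hIX⟩, hcard⟩
  have hubd : ∀ n ∈ Set.ncard '' {I | M.Indep I ∧ I ⊆ X}, n ≤ r := by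
    rintro n ⟨J, ⟨hJ, hJX⟩, rfl⟩
    exact hub J hJ hJX
  exact le_antisymm (csSup_le ⟨r, hmem⟩ hubd) (le_csSup ⟨r, hubd⟩ hmem)

lemma rk_ub_of (lx : List (Fin 10)) (hndx : lx.Nodup) (r : ℕ)
    (h : ∀ l ∈ lx.sublists, l.length = r + 1 → ¬ GoodL l) :
    ∀ J, E4.Indep J → J ⊆ ↑lx.toFinset → J.ncard ≤ r := by
  classical
  intro J hJ hJX
  by_contra hcon
  obtain ⟨J', hJ'J, hJ'card⟩ := Set.exists_subset_card_eq (by omega : r + 1 ≤ J.ncard)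
  have hJ'indep := hJ.subset hJ'J
  have hJ'X : J' ⊆ ↑lx.toFinset := hJ'J.trans hJX
  set Jf := (Set.toFinite J').toFinset with hJf
  have hJfX : Jf ⊆ lx.toFinset := by rw [hJf, Set.Finite.toFinset_subset]; exact_mod_cast hJ'X
  set l' := lx.filter (fun x => x ∈ Jf) with hl'
  have hl'sub : List.Sublist l' lx := List.filter_sublist
  have hl'nd : l'.Nodup := hl'sub.nodup hndx
  have hl'fin : l'.toFinset = Jf := by
    ext x
    simp only [hl', List.mem_toFinset, List.mem_filter, decide_eq_true_eq]
    exact ⟨fun hx => hx.2, fun hx => ⟨List.mem_toFinset.1 (hJfX hx), hx⟩⟩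
  have hl'len : l'.length = r + 1 := by
    rw [← List.toFinset_card_of_nodup hl'nd, hl'fin, hJf,
      ← Set.ncard_eq_toFinset_card J' (Set.toFinite J'), hJ'card]
  have : GoodL l' := by
    rw [← E4_indep_iffL l' hl'nd, hl'fin, hJf, Set.Finite.coe_toFinset]
    exact hJ'indep
  exact h l' (List.mem_sublists.2 hl'sub) hl'len this

lemma rk_eq_of_lists (X : Set (Fin 10)) (lx lw : List (Fin 10)) (hndx : lx.Nodup)
    (hndw : lw.Nodup) (hX : X = ↑lx.toFinset) (r : ℕ) (hsub : lw.toFinset ⊆ lx.toFinset)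
    (hw : GoodL lw) (hlen : lw.length = r)
    (hub : ∀ l ∈ lx.sublists, l.length = r + 1 → ¬ GoodL l) : rk E4 X = r := by
  subst hX
  exact rk_eq_of_s18 E4 _ r ↑lw.toFinset ((E4_indep_iffL lw hndw).2 hw) (by exact_mod_cast hsub)
    (by rw [Set.ncard_coe_finset, List.toFinset_card_of_nodup hndw, hlen])
    (rk_ub_of lx hndx r hub)

lemma rk_univ_s18 : rk E4 Set.univ = 5 := by
  refine rk_eq_of_s18 E4 Set.univ 5 ↑([0,1,2,3,4] : List (Fin 10)).toFinset
    ((E4_indep_iffL _ (by decide)).2 (by decide)) (Set.subset_univ _)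
    (by rw [Set.ncard_coe_finset]; decide)
    (fun J hJ _ => E4_indep_ncard_le J hJ)

lemma isBase_of (lb : List (Fin 10)) (hnd : lb.Nodup) (hb : GoodL lb)
    (hmax : ∀ x : Fin 10, x ∉ lb → ¬ GoodL (x :: lb)) : E4.IsBase ↑lb.toFinset := by
  refine Matroid.Indep.isBase_of_forall_insert ((E4_indep_iffL lb hnd).2 hb) ?_
  rintro e ⟨-, he⟩ hind
  have hel : e ∉ lb := fun h => he (by simpa using h)
  have hind' : E4.Indep ↑(e :: lb).toFinset := by
    rwa [List.toFinset_cons, Finset.coe_insert]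
  exact hmax e hel ((E4_indep_iffL _ (by rw [List.nodup_cons]; exact ⟨hel, hnd⟩)).1 hind')

lemma dual_indep_of_s18 (I : Set (Fin 10)) (lb : List (Fin 10)) (hb : E4.IsBase ↑lb.toFinset)
    (hdisj : Disjoint I (↑lb.toFinset : Set (Fin 10))) : E4✶.Indep I :=
  Matroid.dual_indep_iff_exists'.2
    ⟨by rw [E4_ground]; exact Set.subset_univ _, ⟨↑lb.toFinset, hb, hdisj⟩⟩

lemma not_dual_indep_of (C : Finset (Fin 10)) (lc : List (Fin 10)) (hnd : lc.Nodup)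
    (hcompl : ∀ x : Fin 10, x ∈ lc ↔ x ∉ C)
    (h : ∀ l ∈ lc.sublists, l.length = 5 → ¬ GoodL l) : ¬ E4✶.Indep ↑C := by
  rintro ⟨-, B, hB, hdisj⟩
  have hid : E4.IsBase ↑([0,1,2,3,4] : List (Fin 10)).toFinset :=
    isBase_of _ (by decide) (by decide) (by decide)
  have hcard : B.ncard = 5 := by
    rw [hB.ncard_eq_ncard_of_isBase hid, Set.ncard_coe_finset]; decide
  have hBsub : B ⊆ ↑lc.toFinset := by
    intro x hx
    exact Finset.mem_coe.2 (List.mem_toFinset.2 ((hcompl x).2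
      (fun hxC => Set.disjoint_right.1 hdisj hx hxC)))
  have := rk_ub_of lc hnd 4 h B hB.indep hBsub
  omega

lemma list_toFinset_erase (l : List (Fin 10)) (hnd : l.Nodup) (a : Fin 10) :
    (l.erase a).toFinset = l.toFinset.erase a := by
  ext x
  simp only [List.mem_toFinset, Finset.mem_erase]
  rw [List.Nodup.mem_erase_iff hnd]

lemma isCircuit_of (lc : List (Fin 10)) (hnd : lc.Nodup) (h1 : ¬ GoodL lc)
    (h2 : ∀ x ∈ lc, GoodL (lc.erase x)) : IsCircuit E4 ↑lc.toFinset := by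
  refine ⟨by rw [E4_ground]; exact Set.subset_univ _,
    fun h => h1 ((E4_indep_iffL lc hnd).1 h), fun C' hss => ?_⟩
  obtain ⟨x, hxc, hxn⟩ := Set.exists_of_ssubset hss
  have hxl : x ∈ lc := by simpa using hxc
  have hsub : C' ⊆ ↑((lc.erase x).toFinset) := by
    rw [list_toFinset_erase lc hnd x, Finset.coe_erase]
    exact fun y hy => ⟨hss.subset hy, fun h => hxn (by rwa [← Set.mem_singleton_iff.1 h])⟩
  exact ((E4_indep_iffL _ (hnd.erase x)).2 (h2 x hxl)).subset hsub

lemma isCocircuit_of (lc : List (Fin 10)) (hnd : lc.Nodup) (h1 : ¬ E4✶.Indep ↑lc.toFinset)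
    (h2 : ∀ x ∈ lc, E4✶.Indep ↑((lc.erase x).toFinset)) : IsCocircuit E4 ↑lc.toFinset := by
  refine ⟨by rw [Matroid.dual_ground, E4_ground]; exact Set.subset_univ _, h1,
    fun C' hss => ?_⟩
  obtain ⟨x, hxc, hxn⟩ := Set.exists_of_ssubset hss
  have hxl : x ∈ lc := by simpa using hxc
  have hsub : C' ⊆ ↑((lc.erase x).toFinset) := by
    rw [list_toFinset_erase lc hnd x, Finset.coe_erase]
    exact fun y hy => ⟨hss.subset hy, fun h => hxn (by rwa [← Set.mem_singleton_iff.1 h])⟩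
  exact (h2 x hxl).subset hsub

/-- In `E_4` (columns labelled `1,…,10` in the paper, `0,…,9` here), each of
`A₁ = {1,2,5,6,7,10}` (here `{0,1,4,5,6,9}`) and `A₂ = {1,2,3,4,8,9}` (here
`{0,1,2,3,7,8}`) is both a union of circuits and a union of cocircuits of `E_4`, and
each of `(A₁, A₁ᶜ)` and `(A₂, A₂ᶜ)` is a non-minimal exact 3-separation of `E_4`; in
particular, `E_4` is not internally 4-connected. -/
theorem E4_two_separations :
    IsUnionOfCircuits E4 ({0,1,4,5,6,9} : Set (Fin 10)) ∧
    IsUnionOfCocircuits E4 ({0,1,4,5,6,9} : Set (Fin 10)) ∧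
    IsUnionOfCircuits E4 ({0,1,2,3,7,8} : Set (Fin 10)) ∧
    IsUnionOfCocircuits E4 ({0,1,2,3,7,8} : Set (Fin 10)) ∧
    IsNonMinimalExactKSep E4 3 ({0,1,4,5,6,9} : Set (Fin 10))
      ({2,3,7,8} : Set (Fin 10)) ∧
    IsNonMinimalExactKSep E4 3 ({0,1,2,3,7,8} : Set (Fin 10))
      ({4,5,6,9} : Set (Fin 10)) ∧
    ¬ InternallyFourConnected E4 := by
  classical
  -- Set-literal / Finset-coercion conversions
  have hA1 : ({0,1,4,5,6,9} : Set (Fin 10)) = ↑(([0,1,4,5,6,9] : List (Fin 10)).toFinset) := by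
    ext x; simp
  have hB1 : ({2,3,7,8} : Set (Fin 10)) = ↑(([2,3,7,8] : List (Fin 10)).toFinset) := by
    ext x; simp
  have hA2 : ({0,1,2,3,7,8} : Set (Fin 10)) = ↑(([0,1,2,3,7,8] : List (Fin 10)).toFinset) := by
    ext x; simp
  have hB2 : ({4,5,6,9} : Set (Fin 10)) = ↑(([4,5,6,9] : List (Fin 10)).toFinset) := by
    ext x; simp
  -- The four circuits
  have hc1 : IsCircuit E4 ({0,1,4,9} : Set (Fin 10)) := by
    have h := isCircuit_of [0,1,4,9] (by decide) (by decide) (by decide)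
    rwa [show (↑(([0,1,4,9] : List (Fin 10)).toFinset) : Set (Fin 10)) = {0,1,4,9} from
      by ext x; simp] at h
  have hc2 : IsCircuit E4 ({5,6,9} : Set (Fin 10)) := by
    have h := isCircuit_of [5,6,9] (by decide) (by decide) (by decide)
    rwa [show (↑(([5,6,9] : List (Fin 10)).toFinset) : Set (Fin 10)) = {5,6,9} from
      by ext x; simp] at h
  have hc3 : IsCircuit E4 ({2,7,8} : Set (Fin 10)) := by
    have h := isCircuit_of [2,7,8] (by decide) (by decide) (by decide)
    rwa [show (↑(([2,7,8] : List (Fin 10)).toFinset) : Set (Fin 10)) = {2,7,8} from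
      by ext x; simp] at h
  have hc4 : IsCircuit E4 ({0,1,3,7} : Set (Fin 10)) := by
    have h := isCircuit_of [0,1,3,7] (by decide) (by decide) (by decide)
    rwa [show (↑(([0,1,3,7] : List (Fin 10)).toFinset) : Set (Fin 10)) = {0,1,3,7} from
      by ext x; simp] at h
  -- The four cocircuits
  have hd1 : IsCocircuit E4 ({0,1,5,6} : Set (Fin 10)) := by
    have h := isCocircuit_of [0,1,5,6] (by decide)
      (not_dual_indep_of _ [2,3,4,7,8,9] (by decide) (by decide) (by decide)) ?_
    · rwa [show (↑(([0,1,5,6] : List (Fin 10)).toFinset) : Set (Fin 10)) = {0,1,5,6} from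
        by ext x; simp] at h
    · intro x hx
      simp only [List.mem_cons, List.not_mem_nil, or_false] at hx
      rcases hx with rfl | rfl | rfl | rfl
      · exact dual_indep_of_s18 _ [0,2,3,4,7] (isBase_of _ (by decide) (by decide) (by decide))
          (by rw [Finset.disjoint_coe]; decide)
      · exact dual_indep_of_s18 _ [1,2,3,4,8] (isBase_of _ (by decide) (by decide) (by decide))
          (by rw [Finset.disjoint_coe]; decide)
      · exact dual_indep_of_s18 _ [2,3,4,5,9] (isBase_of _ (by decide) (by decide) (by decide))
          (by rw [Finset.disjoint_coe]; decide)
      · exact dual_indep_of_s18 _ [2,3,4,6,9] (isBase_of _ (by decide) (by decide) (by decide))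
          (by rw [Finset.disjoint_coe]; decide)
  have hd2 : IsCocircuit E4 ({4,6,9} : Set (Fin 10)) := by
    have h := isCocircuit_of [4,6,9] (by decide)
      (not_dual_indep_of _ [0,1,2,3,5,7,8] (by decide) (by decide) (by decide)) ?_
    · rwa [show (↑(([4,6,9] : List (Fin 10)).toFinset) : Set (Fin 10)) = {4,6,9} from
        by ext x; simp] at h
    · intro x hx
      simp only [List.mem_cons, List.not_mem_nil, or_false] at hx
      rcases hx with rfl | rfl | rfl
      · exact dual_indep_of_s18 _ [0,1,2,3,4] (isBase_of _ (by decide) (by decide) (by decide))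
          (by rw [Finset.disjoint_coe]; decide)
      · exact dual_indep_of_s18 _ [0,1,2,3,6] (isBase_of _ (by decide) (by decide) (by decide))
          (by rw [Finset.disjoint_coe]; decide)
      · exact dual_indep_of_s18 _ [0,1,2,3,9] (isBase_of _ (by decide) (by decide) (by decide))
          (by rw [Finset.disjoint_coe]; decide)
  have hd3 : IsCocircuit E4 ({2,3,7} : Set (Fin 10)) := by
    have h := isCocircuit_of [2,3,7] (by decide)
      (not_dual_indep_of _ [0,1,4,5,6,8,9] (by decide) (by decide) (by decide)) ?_
    · rwa [show (↑(([2,3,7] : List (Fin 10)).toFinset) : Set (Fin 10)) = {2,3,7} from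
        by ext x; simp] at h
    · intro x hx
      simp only [List.mem_cons, List.not_mem_nil, or_false] at hx
      rcases hx with rfl | rfl | rfl
      · exact dual_indep_of_s18 _ [0,1,2,4,5] (isBase_of _ (by decide) (by decide) (by decide))
          (by rw [Finset.disjoint_coe]; decide)
      · exact dual_indep_of_s18 _ [0,1,3,4,5] (isBase_of _ (by decide) (by decide) (by decide))
          (by rw [Finset.disjoint_coe]; decide)
      · exact dual_indep_of_s18 _ [0,1,4,5,7] (isBase_of _ (by decide) (by decide) (by decide))
          (by rw [Finset.disjoint_coe]; decide)
  have hd4 : IsCocircuit E4 ({0,1,2,8} : Set (Fin 10)) := by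
    have h := isCocircuit_of [0,1,2,8] (by decide)
      (not_dual_indep_of _ [3,4,5,6,7,9] (by decide) (by decide) (by decide)) ?_
    · rwa [show (↑(([0,1,2,8] : List (Fin 10)).toFinset) : Set (Fin 10)) = {0,1,2,8} from
        by ext x; simp] at h
    · intro x hx
      simp only [List.mem_cons, List.not_mem_nil, or_false] at hx
      rcases hx with rfl | rfl | rfl | rfl
      · exact dual_indep_of_s18 _ [0,3,4,5,6] (isBase_of _ (by decide) (by decide) (by decide))
          (by rw [Finset.disjoint_coe]; decide)
      · exact dual_indep_of_s18 _ [1,3,4,5,6] (isBase_of _ (by decide) (by decide) (by decide))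
          (by rw [Finset.disjoint_coe]; decide)
      · exact dual_indep_of_s18 _ [2,3,4,5,6] (isBase_of _ (by decide) (by decide) (by decide))
          (by rw [Finset.disjoint_coe]; decide)
      · exact dual_indep_of_s18 _ [3,4,5,6,8] (isBase_of _ (by decide) (by decide) (by decide))
          (by rw [Finset.disjoint_coe]; decide)
  -- Rank computations
  have hrA1 : rk E4 ({0,1,4,5,6,9} : Set (Fin 10)) = 4 :=
    rk_eq_of_lists _ [0,1,4,5,6,9] [0,1,4,5] (by decide) (by decide) hA1 4 (by decide)
      (by decide) (by decide) (by decide)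
  have hrB1 : rk E4 ({2,3,7,8} : Set (Fin 10)) = 3 :=
    rk_eq_of_lists _ [2,3,7,8] [2,3,7] (by decide) (by decide) hB1 3 (by decide)
      (by decide) (by decide) (by decide)
  have hrA2 : rk E4 ({0,1,2,3,7,8} : Set (Fin 10)) = 4 :=
    rk_eq_of_lists _ [0,1,2,3,7,8] [0,1,2,3] (by decide) (by decide) hA2 4 (by decide)
      (by decide) (by decide) (by decide)
  have hrB2 : rk E4 ({4,5,6,9} : Set (Fin 10)) = 3 :=
    rk_eq_of_lists _ [4,5,6,9] [4,5,6] (by decide) (by decide) hB2 3 (by decide)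
      (by decide) (by decide) (by decide)
  -- Complements
  have hdiff1 : Set.univ \ ({0,1,4,5,6,9} : Set (Fin 10)) = {2,3,7,8} := by
    ext x
    simp only [Set.mem_diff, Set.mem_univ, true_and, Set.mem_insert_iff,
      Set.mem_singleton_iff]
    fin_cases x <;> decide
  have hdiff2 : Set.univ \ ({0,1,2,3,7,8} : Set (Fin 10)) = {4,5,6,9} := by
    ext x
    simp only [Set.mem_diff, Set.mem_univ, true_and, Set.mem_insert_iff,
      Set.mem_singleton_iff]
    fin_cases x <;> decide
  -- Connectivity values
  have hlam1 : lam E4 ({0,1,4,5,6,9} : Set (Fin 10)) = 2 := by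
    unfold lam
    rw [E4_ground, hdiff1, hrA1, hrB1, rk_univ_s18]
    norm_num
  have hlam2 : lam E4 ({0,1,2,3,7,8} : Set (Fin 10)) = 2 := by
    unfold lam
    rw [E4_ground, hdiff2, hrA2, hrB2, rk_univ_s18]
    norm_num
  -- ncard computations
  have hnA1 : ({0,1,4,5,6,9} : Set (Fin 10)).ncard = 6 := by
    rw [hA1, Set.ncard_coe_finset]; decide
  have hnB1 : ({2,3,7,8} : Set (Fin 10)).ncard = 4 := by
    rw [hB1, Set.ncard_coe_finset]; decide
  have hnA2 : ({0,1,2,3,7,8} : Set (Fin 10)).ncard = 6 := by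
    rw [hA2, Set.ncard_coe_finset]; decide
  have hnB2 : ({4,5,6,9} : Set (Fin 10)).ncard = 4 := by
    rw [hB2, Set.ncard_coe_finset]; decide
  -- The two separations
  have hsep1 : IsNonMinimalExactKSep E4 3 ({0,1,4,5,6,9} : Set (Fin 10))
      ({2,3,7,8} : Set (Fin 10)) := by
    refine ⟨⟨?_, ?_, ?_, ?_, ?_⟩, ?_, ?_⟩
    · rw [E4_ground, hA1, hB1, ← Finset.coe_union,
        show ([0,1,4,5,6,9] : List (Fin 10)).toFinset ∪ ([2,3,7,8] : List (Fin 10)).toFinset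
          = Finset.univ from by decide]
      exact Finset.coe_univ
    · rw [hA1, hB1, Finset.disjoint_coe]; decide
    · rw [hnA1]; norm_num
    · rw [hnB1]; norm_num
    · rw [hlam1]; norm_num
    · rw [hnA1]; norm_num
    · rw [hnB1]; norm_num
  have hsep2 : IsNonMinimalExactKSep E4 3 ({0,1,2,3,7,8} : Set (Fin 10))
      ({4,5,6,9} : Set (Fin 10)) := by
    refine ⟨⟨?_, ?_, ?_, ?_, ?_⟩, ?_, ?_⟩
    · rw [E4_ground, hA2, hB2, ← Finset.coe_union,
        show ([0,1,2,3,7,8] : List (Fin 10)).toFinset ∪ ([4,5,6,9] : List (Fin 10)).toFinset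
          = Finset.univ from by decide]
      exact Finset.coe_univ
    · rw [hA2, hB2, Finset.disjoint_coe]; decide
    · rw [hnA2]; norm_num
    · rw [hnB2]; norm_num
    · rw [hlam2]; norm_num
    · rw [hnA2]; norm_num
    · rw [hnB2]; norm_num
  refine ⟨?_, ?_, ?_, ?_, hsep1, hsep2, fun ⟨_, h⟩ => h _ _ hsep1⟩
  · refine ⟨{({0,1,4,9} : Set (Fin 10)), ({5,6,9} : Set (Fin 10))}, ?_, ?_⟩
    · intro C hC
      simp only [Set.mem_insert_iff, Set.mem_singleton_iff] at hC
      rcases hC with rfl | rfl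
      · exact hc1
      · exact hc2
    · rw [Set.sUnion_pair]
      ext x
      simp only [Set.mem_union, Set.mem_insert_iff, Set.mem_singleton_iff]
      fin_cases x <;> decide
  · refine ⟨{({0,1,5,6} : Set (Fin 10)), ({4,6,9} : Set (Fin 10))}, ?_, ?_⟩
    · intro C hC
      simp only [Set.mem_insert_iff, Set.mem_singleton_iff] at hC
      rcases hC with rfl | rfl
      · exact hd1
      · exact hd2
    · rw [Set.sUnion_pair]
      ext x
      simp only [Set.mem_union, Set.mem_insert_iff, Set.mem_singleton_iff]
      fin_cases x <;> decide
  · refine ⟨{({2,7,8} : Set (Fin 10)), ({0,1,3,7} : Set (Fin 10))}, ?_, ?_⟩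
    · intro C hC
      simp only [Set.mem_insert_iff, Set.mem_singleton_iff] at hC
      rcases hC with rfl | rfl
      · exact hc3
      · exact hc4
    · rw [Set.sUnion_pair]
      ext x
      simp only [Set.mem_union, Set.mem_insert_iff, Set.mem_singleton_iff]
      fin_cases x <;> decide
  · refine ⟨{({2,3,7} : Set (Fin 10)), ({0,1,2,8} : Set (Fin 10))}, ?_, ?_⟩
    · intro C hC
      simp only [Set.mem_insert_iff, Set.mem_singleton_iff] at hC
      rcases hC with rfl | rfl
      · exact hd3
      · exact hd4
    · rw [Set.sUnion_pair]
      ext x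
      simp only [Set.mem_union, Set.mem_insert_iff, Set.mem_singleton_iff]
      fin_cases x <;> decide

end PaperMatroid
end
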